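/- For 0 < α₁ < α ≤ 1, the ratio of the density of α₁ Y_{1/α₁} to the density of α Y_{1/α} tends to 0 as x → ∞, where Y_r denotes a chi-squared variable with r degrees of freedom; consequently there exists x₀ ≥ 0 such that P(α₁ Y_{1/α₁} ≥ x) ≤ P(α Y_{1/α} ≥ x) for all x ≥ x₀. -/

import Mathlib

open MeasureTheory Filter

/-- The density of the scaled chi-squared random variable `β • Y_{1/β}` (chi-squared with
`1/β` degrees of freedom scaled by `β`), i.e. the Gamma density with shape `1/(2β)` and
scale `2β`. -/
noncomputable def scaledChiSqDensity (β x : ℝ) : ℝ :=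
  x ^ (1 / (2 * β) - 1) * Real.exp (-x / (2 * β)) /
    ((2 * β) ^ (1 / (2 * β)) * Real.Gamma (1 / (2 * β)))

/-!
Up to a positive constant, the quotient of the two densities is `x ^ d * exp (-d * x)` with
`d = 1/(2α₁) - 1/(2α) > 0`, which tends to `0`. Hence the first density is eventually dominated
by the second, and integrating this pointwise bound over `[x, ∞)` compares the tails.
-/

lemma eventually_setIntegral_Ici_le {f g : ℝ → ℝ} {a : ℝ}
    (hf : IntegrableOn f (Set.Ioi a)) (hg : IntegrableOn g (Set.Ioi a))
    (hfg : ∀ᶠ x in atTop, f x ≤ g x) :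
    ∀ᶠ x in atTop, ∫ t in Set.Ici x, f t ≤ ∫ t in Set.Ici x, g t := by
  obtain ⟨x₁, hx₁⟩ := eventually_atTop.mp hfg
  filter_upwards [eventually_ge_atTop x₁, eventually_gt_atTop a] with x hx₁x hax
  have hsub : Set.Ici x ⊆ Set.Ioi a := Set.Ici_subset_Ioi.mpr hax
  exact setIntegral_mono_on (hf.mono_set hsub) (hg.mono_set hsub) measurableSet_Ici
    fun t ht => hx₁ t (hx₁x.trans ht)

namespace scaledChiSqDensity

variable {β x : ℝ}

lemma pos (hβ : 0 < β) (hx : 0 < x) : 0 < scaledChiSqDensity β x := by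
  unfold scaledChiSqDensity
  have hshape : 0 < 1 / (2 * β) := by positivity
  positivity

lemma integrableOn_Ioi (hβ : 0 < β) : IntegrableOn (scaledChiSqDensity β) (Set.Ioi 0) := by
  have hshape : 0 < 1 / (2 * β) := by positivity
  have h := (integrableOn_rpow_mul_exp_neg_mul_rpow (by linarith : (-1 : ℝ) < 1 / (2 * β) - 1)
    zero_lt_one hshape).const_mul (((2 * β) ^ (1 / (2 * β)) * Real.Gamma (1 / (2 * β)))⁻¹)
  rw [← IntegrableOn] at h
  refine h.congr_fun (fun x _ => ?_) measurableSet_Ioi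
  simp only [scaledChiSqDensity, Real.rpow_one]
  rw [show -(1 / (2 * β)) * x = -x / (2 * β) by ring]
  ring

lemma div_eq {α₁ α : ℝ} (h₁ : 0 < α₁) (hα : 0 < α) (hx : 0 < x) :
    scaledChiSqDensity α₁ x / scaledChiSqDensity α x =
      ((2 * α) ^ (1 / (2 * α)) * Real.Gamma (1 / (2 * α)) /
        ((2 * α₁) ^ (1 / (2 * α₁)) * Real.Gamma (1 / (2 * α₁)))) *
      (x ^ (1 / (2 * α₁) - 1 / (2 * α)) * Real.exp (-(1 / (2 * α₁) - 1 / (2 * α)) * x)) := by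
  have hG : 0 < Real.Gamma (1 / (2 * α)) := Real.Gamma_pos_of_pos (by positivity)
  have hG₁ : 0 < Real.Gamma (1 / (2 * α₁)) := Real.Gamma_pos_of_pos (by positivity)
  have hpow : x ^ (1 / (2 * α₁) - 1) =
      x ^ (1 / (2 * α₁) - 1 / (2 * α)) * x ^ (1 / (2 * α) - 1) := by
    rw [← Real.rpow_add hx]; ring_nf
  have hexp : Real.exp (-x / (2 * α₁)) =
      Real.exp (-(1 / (2 * α₁) - 1 / (2 * α)) * x) * Real.exp (-x / (2 * α)) := by
    rw [← Real.exp_add]; congr 1; field_simp; ring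
  have : 0 < x ^ (1 / (2 * α) - 1) := Real.rpow_pos_of_pos hx _
  have : 0 < Real.exp (-x / (2 * α)) := Real.exp_pos _
  unfold scaledChiSqDensity
  rw [hpow, hexp]
  field_simp

lemma tendsto_div_atTop {α₁ α : ℝ} (h₁ : 0 < α₁) (h₂ : α₁ < α) :
    Tendsto (fun x => scaledChiSqDensity α₁ x / scaledChiSqDensity α x) atTop (nhds 0) := by
  have hα : 0 < α := h₁.trans h₂
  have hd : 0 < 1 / (2 * α₁) - 1 / (2 * α) :=
    sub_pos.mpr (one_div_lt_one_div_of_lt (by positivity) (by linarith))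
  have h := (tendsto_rpow_mul_exp_neg_mul_atTop_nhds_zero (1 / (2 * α₁) - 1 / (2 * α)) _ hd).const_mul
    ((2 * α) ^ (1 / (2 * α)) * Real.Gamma (1 / (2 * α)) /
      ((2 * α₁) ^ (1 / (2 * α₁)) * Real.Gamma (1 / (2 * α₁))))
  rw [mul_zero] at h
  refine h.congr' ?_
  filter_upwards [eventually_gt_atTop 0] with x hx
  exact (div_eq h₁ hα hx).symm

lemma eventually_le {α₁ α : ℝ} (h₁ : 0 < α₁) (h₂ : α₁ < α) :
    ∀ᶠ x in atTop, scaledChiSqDensity α₁ x ≤ scaledChiSqDensity α x := by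
  filter_upwards [(tendsto_div_atTop h₁ h₂).eventually_le_const zero_lt_one,
    eventually_gt_atTop 0] with x hratio hx
  exact (div_le_one (pos (h₁.trans h₂) hx)).mp hratio

end scaledChiSqDensity

theorem scaledChiSq_density_ratio_tendsto_zero_and_tail_le_general
    (α₁ α : ℝ) (h₁ : 0 < α₁) (h₂ : α₁ < α) :
    Tendsto (fun x => scaledChiSqDensity α₁ x / scaledChiSqDensity α x) atTop (nhds 0) ∧
    ∃ x₀ : ℝ, 0 ≤ x₀ ∧ ∀ x ≥ x₀,
      (∫ t in Set.Ici x, scaledChiSqDensity α₁ t) ≤ ∫ t in Set.Ici x, scaledChiSqDensity α t := by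
  refine ⟨scaledChiSqDensity.tendsto_div_atTop h₁ h₂, ?_⟩
  obtain ⟨x₁, hx₁⟩ := eventually_atTop.mp <| eventually_setIntegral_Ici_le
    (scaledChiSqDensity.integrableOn_Ioi h₁) (scaledChiSqDensity.integrableOn_Ioi (h₁.trans h₂))
    (scaledChiSqDensity.eventually_le h₁ h₂)
  exact ⟨max x₁ 0, le_max_right _ _, fun x hx => hx₁ x (le_of_max_le_left hx)⟩

/-- For `0 < α₁ < α ≤ 1`, the ratio of the density of `α₁ Y_{1/α₁}` to the density of
`α Y_{1/α}` tends to `0` as `x → ∞`; consequently there exists `x₀ ≥ 0` such that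
`P(α₁ Y_{1/α₁} ≥ x) ≤ P(α Y_{1/α} ≥ x)` for all `x ≥ x₀` (tails expressed as integrals
of the densities). -/
theorem scaledChiSq_density_ratio_tendsto_zero_and_tail_le
    (α₁ α : ℝ) (h₁ : 0 < α₁) (h₂ : α₁ < α) (h₃ : α ≤ 1) :
    Tendsto (fun x => scaledChiSqDensity α₁ x / scaledChiSqDensity α x) atTop (nhds 0) ∧
    ∃ x₀ : ℝ, 0 ≤ x₀ ∧ ∀ x ≥ x₀,
      (∫ t in Set.Ici x, scaledChiSqDensity α₁ t) ≤ ∫ t in Set.Ici x, scaledChiSqDensity α t :=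
  scaledChiSq_density_ratio_tendsto_zero_and_tail_le_general α₁ α h₁ h₂
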